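/- Let S be the recoverable set R^{π_b}(T_B; S₀), assume S is forward invariant under the Backup-CBF closed-loop dynamics f_BCBF, assume S₀ ⊆ C, assume T_H > 0, and assume that f_BCBF(x) = f_nom(x) for every x in the Backup-CBF inactive set I_BCBF. Then the relative interior of I_BCBF in S is contained in the gatekeeper inactive set: int_S(I_BCBF) ⊆ I_GK. That is, for every x ∈ S such that some open ball B_ε(x) satisfies B_ε(x) ∩ S ⊆ I_BCBF, there exists T_S with 0 < T_S ≤ T_H such that Valid(x; T_S) holds. -/

import Mathlib

/-!
Near `x` the filtered and nominal vector fields agree along the filtered trajectory: for small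
`τ ≥ 0` it stays in the ball `B_ε(x)` by continuity and in `S` by forward invariance, hence in
`I_BCBF`. Since `f_nom` is Lipschitz near `x`, uniqueness of ODE solutions makes the nominal and
filtered trajectories coincide on some `[0, T_S]`, so the nominal trajectory stays in `S ⊆ C` up to
`T_S` and the switch state `φnom x T_S` is recoverable, which is `Valid(x; T_S)`.
-/

/-- `φ` is a trajectory of the vector field `f` from initial state `x`:
`φ 0 = x` and `φ` solves `φ' τ = f (φ τ)` for all `τ`. -/
def IsTrajectory {n : ℕ}
    (f : EuclideanSpace ℝ (Fin n) → EuclideanSpace ℝ (Fin n))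
    (x : EuclideanSpace ℝ (Fin n)) (φ : ℝ → EuclideanSpace ℝ (Fin n)) : Prop :=
  φ 0 = x ∧ ∀ τ : ℝ, HasDerivAt φ (f (φ τ)) τ

/-- The recoverable set `R^{π_b}(T_B; S₀)`: states from which the backup
trajectory stays in `C` on `[0, T_B]` and reaches `S₀` at time `T_B`. -/
def Recoverable {n : ℕ} (C S₀ : Set (EuclideanSpace ℝ (Fin n))) (T_B : ℝ)
    (φb : EuclideanSpace ℝ (Fin n) → ℝ → EuclideanSpace ℝ (Fin n)) :
    Set (EuclideanSpace ℝ (Fin n)) :=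
  {x | (∀ τ ∈ Set.Icc (0 : ℝ) T_B, φb x τ ∈ C) ∧ φb x T_B ∈ S₀}

/-- Validity indicator: the nominal trajectory from `x` stays in `C` on `[0, T_S]`,
and from the switch state `φnom x T_S` the backup trajectory stays in `C` on
`[0, T_B]` and reaches `S₀` at time `T_B`. -/
def Valid {n : ℕ} (C S₀ : Set (EuclideanSpace ℝ (Fin n))) (T_B : ℝ)
    (φnom φb : EuclideanSpace ℝ (Fin n) → ℝ → EuclideanSpace ℝ (Fin n))
    (x : EuclideanSpace ℝ (Fin n)) (T_S : ℝ) : Prop :=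
  (∀ τ ∈ Set.Icc (0 : ℝ) T_S, φnom x τ ∈ C) ∧
  (∀ τ ∈ Set.Icc (0 : ℝ) T_B, φb (φnom x T_S) τ ∈ C) ∧
  φb (φnom x T_S) T_B ∈ S₀

open Set Filter Topology

theorem LocallyLipschitz.eventually_eqOn_Icc_of_hasDerivAt
    {E : Type*} [NormedAddCommGroup E] [NormedSpace ℝ E] {f g : E → E} {φ ψ : ℝ → E} {t₀ : ℝ}
    (hf : LocallyLipschitz f)
    (hφ : ∀ τ, HasDerivAt φ (f (φ τ)) τ) (hψ : ∀ τ, HasDerivAt ψ (g (ψ τ)) τ)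
    (h₀ : φ t₀ = ψ t₀) (hfg : ∀ᶠ τ in 𝓝[≥] t₀, g (ψ τ) = f (ψ τ)) :
    ∀ᶠ T in 𝓝[>] t₀, EqOn φ ψ (Icc t₀ T) := by
  obtain ⟨K, s, hs, hK⟩ := hf (φ t₀)
  have hφs : ∀ᶠ τ in 𝓝[≥] t₀, φ τ ∈ s :=
    nhdsWithin_le_nhds ((hφ t₀).continuousAt.eventually_mem hs)
  have hψs : ∀ᶠ τ in 𝓝[≥] t₀, ψ τ ∈ s :=
    nhdsWithin_le_nhds ((hψ t₀).continuousAt.eventually_mem (h₀ ▸ hs))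
  obtain ⟨u, hu, hsub⟩ := mem_nhdsGE_iff_exists_Ico_subset.mp (hφs.and (hψs.and hfg))
  filter_upwards [Ioo_mem_nhdsGT hu] with T hT
  have hIco : Ico t₀ T ⊆ Ico t₀ u := Ico_subset_Ico_right hT.2.le
  exact ODE_solution_unique_of_mem_Icc_right (v := fun _ ↦ f) (s := fun _ ↦ s)
    (fun _ _ ↦ hK) (HasDerivAt.continuousOn fun τ _ ↦ hφ τ)
    (fun τ _ ↦ (hφ τ).hasDerivWithinAt) (fun τ hτ ↦ (hsub (hIco hτ)).1)
    (HasDerivAt.continuousOn fun τ _ ↦ hψ τ)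
    (fun τ hτ ↦ (hsub (hIco hτ)).2.2 ▸ (hψ τ).hasDerivWithinAt)
    (fun τ hτ ↦ (hsub (hIco hτ)).2.1) h₀

section Recoverable

variable {n : ℕ} {C S₀ : Set (EuclideanSpace ℝ (Fin n))} {T_B : ℝ}
  {φnom φb : EuclideanSpace ℝ (Fin n) → ℝ → EuclideanSpace ℝ (Fin n)}

theorem recoverable_subset (hφb : ∀ z, φb z 0 = z) (hT_B : 0 ≤ T_B) :
    Recoverable C S₀ T_B φb ⊆ C := fun z hz ↦
  hφb z ▸ hz.1 0 ⟨le_rfl, hT_B⟩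

theorem valid_of_mapsTo_recoverable (hφb : ∀ z, φb z 0 = z) (hT_B : 0 ≤ T_B)
    {x : EuclideanSpace ℝ (Fin n)} {T_S : ℝ} (hT_S : 0 ≤ T_S)
    (h : MapsTo (φnom x) (Icc 0 T_S) (Recoverable C S₀ T_B φb)) :
    Valid C S₀ T_B φnom φb x T_S :=
  ⟨fun _ hτ ↦ recoverable_subset hφb hT_B (h hτ), h ⟨hT_S, le_rfl⟩⟩

end Recoverable

theorem interior_bcbf_subset_gatekeeper_general {n : ℕ}
    (f_nom f_b f_BCBF : EuclideanSpace ℝ (Fin n) → EuclideanSpace ℝ (Fin n))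
    (hf_nom : LocallyLipschitz f_nom)
    (φnom φb φBCBF : EuclideanSpace ℝ (Fin n) → ℝ → EuclideanSpace ℝ (Fin n))
    (hφnom : ∀ x, IsTrajectory f_nom x (φnom x))
    (hφb : ∀ x, IsTrajectory f_b x (φb x))
    (hφBCBF : ∀ x, IsTrajectory f_BCBF x (φBCBF x))
    (C S₀ : Set (EuclideanSpace ℝ (Fin n)))
    (T_B : ℝ) (hT_B : 0 < T_B)
    (T_H : ℝ) (hT_H : 0 < T_H)
    (I_BCBF : Set (EuclideanSpace ℝ (Fin n)))
    (hAgree : ∀ z ∈ I_BCBF, f_BCBF z = f_nom z)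
    (hInv : ∀ x ∈ Recoverable C S₀ T_B φb, ∀ τ : ℝ, 0 ≤ τ →
      φBCBF x τ ∈ Recoverable C S₀ T_B φb)
    (x : EuclideanSpace ℝ (Fin n)) (hxS : x ∈ Recoverable C S₀ T_B φb)
    (hxInt : ∃ ε > (0 : ℝ), Metric.ball x ε ∩ Recoverable C S₀ T_B φb ⊆ I_BCBF) :
    ∃ T_S : ℝ, 0 < T_S ∧ T_S ≤ T_H ∧ Valid C S₀ T_B φnom φb x T_S := by
  obtain ⟨ε, hε, hball⟩ := hxInt
  have hInactive : ∀ᶠ τ in 𝓝[≥] 0, φBCBF x τ ∈ I_BCBF := by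
    have hnear : ∀ᶠ τ in 𝓝[≥] 0, φBCBF x τ ∈ Metric.ball x ε := by
      refine nhdsWithin_le_nhds (((hφBCBF x).2 0).continuousAt.eventually_mem ?_)
      rw [(hφBCBF x).1]
      exact Metric.ball_mem_nhds x hε
    filter_upwards [hnear, self_mem_nhdsWithin] with τ hτ hτ₀
    exact hball ⟨hτ, hInv x hxS τ hτ₀⟩
  have hEq : ∀ᶠ T in 𝓝[>] 0, EqOn (φnom x) (φBCBF x) (Icc 0 T) :=
    hf_nom.eventually_eqOn_Icc_of_hasDerivAt (hφnom x).2 (hφBCBF x).2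
      ((hφnom x).1.trans (hφBCBF x).1.symm) (hInactive.mono fun τ hτ ↦ hAgree _ hτ)
  obtain ⟨T_S, hEqOn, hT_S⟩ := (hEq.and (Ioc_mem_nhdsGT hT_H)).exists
  refine ⟨T_S, hT_S.1, hT_S.2,
    valid_of_mapsTo_recoverable (fun z ↦ (hφb z).1) hT_B.le hT_S.1.le fun τ hτ ↦ ?_⟩
  exact hEqOn hτ ▸ hInv x hxS τ hτ.1

/-- **Theorem (relative interior of the Backup-CBF inactive set is contained in
the gatekeeper inactive set).** Let `S = R^{π_b}(T_B; S₀)` be forward invariant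
under the Backup-CBF closed-loop dynamics, let `S₀ ⊆ C`, `T_H > 0`, and let the
Backup-CBF vector field coincide with the nominal one on the inactive set
`I_BCBF`. Then every `x ∈ S` admitting a ball `B_ε(x)` with
`B_ε(x) ∩ S ⊆ I_BCBF` satisfies `Valid(x; T_S)` for some `T_S ∈ (0, T_H]`. -/
theorem interior_bcbf_subset_gatekeeper {n : ℕ}
    (f_nom f_b f_BCBF : EuclideanSpace ℝ (Fin n) → EuclideanSpace ℝ (Fin n))
    (hf_nom : LocallyLipschitz f_nom) (hf_b : LocallyLipschitz f_b)
    (hf_BCBF : LocallyLipschitz f_BCBF)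
    (φnom φb φBCBF : EuclideanSpace ℝ (Fin n) → ℝ → EuclideanSpace ℝ (Fin n))
    (hφnom : ∀ x, IsTrajectory f_nom x (φnom x))
    (hφb : ∀ x, IsTrajectory f_b x (φb x))
    (hφBCBF : ∀ x, IsTrajectory f_BCBF x (φBCBF x))
    (C S₀ : Set (EuclideanSpace ℝ (Fin n))) (hS₀C : S₀ ⊆ C)
    (T_B : ℝ) (hT_B : 0 < T_B)
    (T_H : ℝ) (hT_H : 0 < T_H)
    (I_BCBF : Set (EuclideanSpace ℝ (Fin n)))
    (hAgree : ∀ z ∈ I_BCBF, f_BCBF z = f_nom z)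
    (hInv : ∀ x ∈ Recoverable C S₀ T_B φb, ∀ τ : ℝ, 0 ≤ τ →
      φBCBF x τ ∈ Recoverable C S₀ T_B φb)
    (x : EuclideanSpace ℝ (Fin n)) (hxS : x ∈ Recoverable C S₀ T_B φb)
    (hxInt : ∃ ε > (0 : ℝ), Metric.ball x ε ∩ Recoverable C S₀ T_B φb ⊆ I_BCBF) :
    ∃ T_S : ℝ, 0 < T_S ∧ T_S ≤ T_H ∧ Valid C S₀ T_B φnom φb x T_S :=
  interior_bcbf_subset_gatekeeper_general f_nom f_b f_BCBF hf_nom φnom φb φBCBF hφnom hφb hφBCBF C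
    S₀ T_B hT_B T_H hT_H I_BCBF hAgree hInv x hxS hxInt
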